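/- The M-Q-M operators are non-strict contractions: for all Q-functions Q, Q̂, one has ‖U Q − U Q̂‖_∞ ≤ ‖Q − Q̂‖_∞ and ‖L Q − L Q̂‖_∞ ≤ ‖Q − Q̂‖_∞. -/
import Mathlib


/-- Maximum of a real-valued function over a nonempty finite type. -/
noncomputable def qmax {I : Type*} [Fintype I] [Nonempty I] (f : I → ℝ) : ℝ :=
  Finset.univ.sup' Finset.univ_nonempty f

/-- Supremum norm of a Q-function over finite nonempty `S × A`. -/
noncomputable def supNorm {S A : Type*} [Fintype S] [Fintype A] [Nonempty S] [Nonempty A]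
    (Q : S → A → ℝ) : ℝ :=
  Finset.univ.sup' Finset.univ_nonempty fun p : S × A => |Q p.1 p.2|

/-- Q-M Bellman operator `T_max`:
`(T_max Q)(s,a) = max_{s' ∈ N(s,a)} [R(s,a,s') + γ max_{a'} Q(s',a')]`. -/
noncomputable def Tmax {S A : Type*} [Fintype A] [Nonempty A]
    (γ : ℝ) (R : S → A → S → ℝ) (N : S → A → Finset S) (hN : ∀ s a, (N s a).Nonempty)
    (Q : S → A → ℝ) : S → A → ℝ :=
  fun s a => (N s a).sup' (hN s a) fun s' => R s a s' + γ * qmax (Q s')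

/-- Q-M Bellman operator `T_min`:
`(T_min Q)(s,a) = min_{s' ∈ N(s,a)} [R(s,a,s') + γ max_{a'} Q(s',a')]`. -/
noncomputable def Tmin {S A : Type*} [Fintype A] [Nonempty A]
    (γ : ℝ) (R : S → A → S → ℝ) (N : S → A → Finset S) (hN : ∀ s a, (N s a).Nonempty)
    (Q : S → A → ℝ) : S → A → ℝ :=
  fun s a => (N s a).inf' (hN s a) fun s' => R s a s' + γ * qmax (Q s')

/-- M-Q-M upper-bound operator `(U Q)(s,a) = min (Q(s,a), (T_max Q)(s,a))`. -/
noncomputable def Uop {S A : Type*} [Fintype A] [Nonempty A]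
    (γ : ℝ) (R : S → A → S → ℝ) (N : S → A → Finset S) (hN : ∀ s a, (N s a).Nonempty)
    (Q : S → A → ℝ) : S → A → ℝ :=
  fun s a => min (Q s a) (Tmax γ R N hN Q s a)

/-- M-Q-M lower-bound operator `(L Q)(s,a) = max (Q(s,a), (T_min Q)(s,a))`. -/
noncomputable def Lop {S A : Type*} [Fintype A] [Nonempty A]
    (γ : ℝ) (R : S → A → S → ℝ) (N : S → A → Finset S) (hN : ∀ s a, (N s a).Nonempty)
    (Q : S → A → ℝ) : S → A → ℝ :=
  fun s a => max (Q s a) (Tmin γ R N hN Q s a)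

lemma abs_sup'_sub_sup'_le' {I : Type*} {s : Finset I} (hs : s.Nonempty) (f g : I → ℝ)
    (M : ℝ) (h : ∀ i ∈ s, |f i - g i| ≤ M) :
    |s.sup' hs f - s.sup' hs g| ≤ M := by
  rw [abs_sub_le_iff]
  obtain ⟨i, hi, hfi⟩ := Finset.exists_mem_eq_sup' hs f
  obtain ⟨j, hj, hgj⟩ := Finset.exists_mem_eq_sup' hs g
  constructor
  · have h1 := (abs_sub_le_iff.mp (h i hi)).1
    have h2 : g i ≤ s.sup' hs g := Finset.le_sup' g hi
    rw [hfi]; linarith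
  · have h1 := (abs_sub_le_iff.mp (h j hj)).2
    have h2 : f j ≤ s.sup' hs f := Finset.le_sup' f hj
    rw [hgj]; linarith

lemma abs_inf'_sub_inf'_le' {I : Type*} {s : Finset I} (hs : s.Nonempty) (f g : I → ℝ)
    (M : ℝ) (h : ∀ i ∈ s, |f i - g i| ≤ M) :
    |s.inf' hs f - s.inf' hs g| ≤ M := by
  rw [abs_sub_le_iff]
  obtain ⟨i, hi, hfi⟩ := Finset.exists_mem_eq_inf' hs f
  obtain ⟨j, hj, hgj⟩ := Finset.exists_mem_eq_inf' hs g
  constructor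
  · have h1 := (abs_sub_le_iff.mp (h j hj)).1
    have h2 : s.inf' hs f ≤ f j := Finset.inf'_le f hj
    rw [hgj]; linarith
  · have h1 := (abs_sub_le_iff.mp (h i hi)).2
    have h2 : s.inf' hs g ≤ g i := Finset.inf'_le g hi
    rw [hfi]; linarith

lemma supNorm_nonneg {S A : Type*} [Fintype S] [Fintype A] [Nonempty S] [Nonempty A]
    (Q : S → A → ℝ) : 0 ≤ supNorm Q := by
  obtain ⟨p⟩ : Nonempty (S × A) := inferInstance
  unfold supNorm
  exact le_trans (abs_nonneg (Q p.1 p.2)) (Finset.le_sup' (fun p : S × A => |Q p.1 p.2|) (Finset.mem_univ p))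

lemma abs_le_supNorm {S A : Type*} [Fintype S] [Fintype A] [Nonempty S] [Nonempty A]
    (Q : S → A → ℝ) (s : S) (a : A) : |Q s a| ≤ supNorm Q :=
  Finset.le_sup' (fun p : S × A => |Q p.1 p.2|) (Finset.mem_univ (s, a))

lemma abs_qmax_sub {S A : Type*} [Fintype S] [Fintype A] [Nonempty S] [Nonempty A]
    (Q Qhat : S → A → ℝ) (s : S) :
    |qmax (Q s) - qmax (Qhat s)| ≤ supNorm (fun s a => Q s a - Qhat s a) := by
  exact abs_sup'_sub_sup'_le' _ _ _ _ (fun a _ =>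
    abs_le_supNorm (fun s a => Q s a - Qhat s a) s a)

/-- The M-Q-M operators are non-strict contractions in the supremum norm. -/
theorem mqm_nonstrict_contraction {S A : Type*} [Fintype S] [Fintype A] [Nonempty S] [Nonempty A]
    (γ : ℝ) (hγ0 : 0 ≤ γ) (hγ1 : γ < 1)
    (R : S → A → S → ℝ) (N : S → A → Finset S) (hN : ∀ s a, (N s a).Nonempty)
    (Q Qhat : S → A → ℝ) :
    supNorm (fun s a => Uop γ R N hN Q s a - Uop γ R N hN Qhat s a) ≤
        supNorm (fun s a => Q s a - Qhat s a) ∧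
      supNorm (fun s a => Lop γ R N hN Q s a - Lop γ R N hN Qhat s a) ≤
        supNorm (fun s a => Q s a - Qhat s a) := by
  set M := supNorm (fun s a => Q s a - Qhat s a) with hM
  have hM0 : 0 ≤ M := supNorm_nonneg _
  have hTmax : ∀ s a, |Tmax γ R N hN Q s a - Tmax γ R N hN Qhat s a| ≤ M := by
    intro s a
    apply abs_sup'_sub_sup'_le'
    intro s' _
    have h1 : |qmax (Q s') - qmax (Qhat s')| ≤ M := abs_qmax_sub Q Qhat s'
    have heq : R s a s' + γ * qmax (Q s') - (R s a s' + γ * qmax (Qhat s'))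
        = γ * (qmax (Q s') - qmax (Qhat s')) := by ring
    rw [heq, abs_mul, abs_of_nonneg hγ0]
    calc γ * |qmax (Q s') - qmax (Qhat s')| ≤ 1 * M := by
          apply mul_le_mul (le_of_lt hγ1) h1 (abs_nonneg _) zero_le_one
      _ = M := one_mul M
  have hTmin : ∀ s a, |Tmin γ R N hN Q s a - Tmin γ R N hN Qhat s a| ≤ M := by
    intro s a
    apply abs_inf'_sub_inf'_le'
    intro s' _
    have h1 : |qmax (Q s') - qmax (Qhat s')| ≤ M := abs_qmax_sub Q Qhat s'
    have heq : R s a s' + γ * qmax (Q s') - (R s a s' + γ * qmax (Qhat s'))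
        = γ * (qmax (Q s') - qmax (Qhat s')) := by ring
    rw [heq, abs_mul, abs_of_nonneg hγ0]
    calc γ * |qmax (Q s') - qmax (Qhat s')| ≤ 1 * M := by
          apply mul_le_mul (le_of_lt hγ1) h1 (abs_nonneg _) zero_le_one
      _ = M := one_mul M
  constructor
  · apply Finset.sup'_le
    rintro ⟨s, a⟩ _
    simp only [Uop]
    refine le_trans (abs_min_sub_min_le_max _ _ _ _) ?_
    exact max_le (abs_le_supNorm (fun s a => Q s a - Qhat s a) s a) (hTmax s a)
  · apply Finset.sup'_le
    rintro ⟨s, a⟩ _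
    simp only [Lop]
    refine le_trans (abs_max_sub_max_le_max _ _ _ _) ?_
    exact max_le (abs_le_supNorm (fun s a => Q s a - Qhat s a) s a) (hTmin s a)
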